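/- arXiv:2411.13334 — 5 statements merged into one kernel-verified Lean document; each statement's English description precedes it below -/
import Mathlib

section
/- Sampling the intermediate states of a Markov chain top-down by recursive midpoint sampling yields the correct joint distribution: if for each level one samples the midpoint between consecutive known states from its conditional distribution given those endpoints, then the resulting full sequence (X_0, ..., X_ℓ) has the law of the Markov chain of length ℓ started at X_0. -/
open Finset

lemma prod_pair_aux {M : Type*} [CommMonoid M] (f : ℕ → M) (n : ℕ) :
    ∏ i ∈ range n, (f (2 * i) * f (2 * i + 1)) = ∏ i ∈ range (2 * n), f i := by
  induction n with
  | zero => simp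
  | succ n ih =>
      rw [prod_range_succ, ih, show 2 * (n + 1) = 2 * n + 1 + 1 by ring,
        prod_range_succ, prod_range_succ, mul_assoc]

lemma telescope_aux (g : ℕ → ℝ) (k : ℕ) (h : ∀ j < k, g j ≠ 0) :
    g 0 * ∏ j ∈ Icc 1 k, (g j / g (j - 1)) = g k := by
  induction k with
  | zero => simp
  | succ k ih =>
      rw [Finset.prod_Icc_succ_top (Nat.le_add_left 1 k), ← mul_assoc,
        ih (fun j hj => h j (hj.trans (Nat.lt_succ_self k))), Nat.add_sub_cancel]
      field_simp [h k (Nat.lt_succ_self k)]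

/-- Top-down recursive midpoint sampling yields the correct joint law. -/
theorem topdown_midpoint_sampling_correct {V : Type*} [Fintype V] [DecidableEq V]
    (P : Matrix V V ℝ) (hnn : ∀ u v, 0 ≤ P u v) (hstoch : ∀ u, ∑ v, P u v = 1)
    (k : ℕ) (w : ℕ → V)
    (hpos : ∀ j ∈ Finset.Icc 1 k, ∀ i ∈ Finset.range (2 ^ (j - 1)),
      0 < (P ^ (2 ^ (k - j + 1))) (w (2 ^ (k - j) * (2 * i))) (w (2 ^ (k - j) * (2 * i + 2)))) :
    (P ^ (2 ^ k)) (w 0) (w (2 ^ k)) *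
      ∏ j ∈ Finset.Icc 1 k, ∏ i ∈ Finset.range (2 ^ (j - 1)),
        ((P ^ (2 ^ (k - j))) (w (2 ^ (k - j) * (2 * i))) (w (2 ^ (k - j) * (2 * i + 1))) *
          (P ^ (2 ^ (k - j))) (w (2 ^ (k - j) * (2 * i + 1))) (w (2 ^ (k - j) * (2 * i + 2))) /
          (P ^ (2 ^ (k - j + 1))) (w (2 ^ (k - j) * (2 * i))) (w (2 ^ (k - j) * (2 * i + 2))))
      = ∏ t ∈ Finset.range (2 ^ k), P (w t) (w (t + 1)) := by
  set F : ℕ → ℝ := fun j =>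
    ∏ i ∈ range (2 ^ j), (P ^ (2 ^ (k - j))) (w (2 ^ (k - j) * i)) (w (2 ^ (k - j) * (i + 1)))
    with hF
  -- Each denominator-level product is positive
  have hFpos : ∀ j < k, 0 < F j := by
    intro j hj
    apply Finset.prod_pos
    intro i hi
    have h1 : j + 1 ∈ Finset.Icc 1 k := by simp; omega
    have h2 : i ∈ Finset.range (2 ^ (j + 1 - 1)) := by simpa using hi
    have := hpos (j + 1) h1 i h2
    have e1 : k - (j + 1) + 1 = k - j := by omega
    have e2 : 2 ^ (k - (j + 1)) * (2 * i) = 2 ^ (k - j) * i := by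
      rw [← e1, pow_succ]; ring
    have e3 : 2 ^ (k - (j + 1)) * (2 * i + 2) = 2 ^ (k - j) * (i + 1) := by
      rw [← e1, pow_succ]; ring
    rwa [e1, e2, e3] at this
  -- Each level product telescopes as F j / F (j-1)
  have hlevel : ∀ j ∈ Finset.Icc 1 k,
      (∏ i ∈ Finset.range (2 ^ (j - 1)),
        ((P ^ (2 ^ (k - j))) (w (2 ^ (k - j) * (2 * i))) (w (2 ^ (k - j) * (2 * i + 1))) *
          (P ^ (2 ^ (k - j))) (w (2 ^ (k - j) * (2 * i + 1))) (w (2 ^ (k - j) * (2 * i + 2))) /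
          (P ^ (2 ^ (k - j + 1))) (w (2 ^ (k - j) * (2 * i))) (w (2 ^ (k - j) * (2 * i + 2)))))
        = F j / F (j - 1) := by
    intro j hj
    simp only [Finset.mem_Icc] at hj
    rw [prod_div_distrib]
    congr 1
    · -- numerator = F j
      have := prod_pair_aux
        (fun i => (P ^ (2 ^ (k - j))) (w (2 ^ (k - j) * i)) (w (2 ^ (k - j) * (i + 1))))
        (2 ^ (j - 1))
      have e : 2 * 2 ^ (j - 1) = 2 ^ j := by
        rw [← pow_succ']; congr 1; omega
      rw [e] at this
      simp only [hF]; rw [← this]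
    · -- denominator = F (j-1)
      simp only [hF]
      apply Finset.prod_congr rfl
      intro i _
      have e1 : k - (j - 1) = k - j + 1 := by omega
      have e2 : 2 ^ (k - j + 1) * i = 2 ^ (k - j) * (2 * i) := by
        rw [pow_succ]; ring
      have e3 : 2 ^ (k - j + 1) * (i + 1) = 2 ^ (k - j) * (2 * i + 2) := by
        rw [pow_succ]; ring
      rw [e1, e2, e3]
  have hF0 : F 0 = (P ^ (2 ^ k)) (w 0) (w (2 ^ k)) := by simp [hF]
  have hFk : F k = ∏ t ∈ Finset.range (2 ^ k), P (w t) (w (t + 1)) := by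
    simp [hF]
  rw [Finset.prod_congr rfl hlevel, ← hF0,
    telescope_aux F k (fun j hj => (hFpos j hj).ne'), hFk]
end

section
/- Let p = (p_1, ..., p_n) be a nonnegative vector with Σ p_i ≥ s > 0, and let q = (q_1, ..., q_n) with p_i − β ≤ q_i ≤ p_i for all i, where 2nβ < s. Then the total variation distance between the normalized distributions p/Σp and q/Σq is at most nβ/(s − 2nβ). -/
open Finset

/-- Let `p` be a nonnegative vector with `∑ p ≥ s > 0`, and `q` an
entrywise under-approximation with `p i − β ≤ q i ≤ p i` for all `i`, where
`2nβ < s`. Then the total variation distance between the normalized distributions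
`p/∑p` and `q/∑q` is at most `nβ/(s − 2nβ)`. -/
theorem normalized_tv_bound (n : ℕ) (p q : Fin n → ℝ) (β s : ℝ)
    (hp : ∀ i, 0 ≤ p i) (hβ : 0 ≤ β) (hs : 0 < s) (hsum : s ≤ ∑ i, p i)
    (hq : ∀ i, p i - β ≤ q i ∧ q i ≤ p i)
    (hns : 2 * n * β < s) :
    (1 / 2) * ∑ i, |p i / (∑ j, p j) - q i / (∑ j, q j)| ≤
      n * β / (s - 2 * n * β) := by
  set P := ∑ j, p j with hPdef
  set Q := ∑ j, q j with hQdef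
  have hnb : (0:ℝ) ≤ n * β := by positivity
  have hQleP : Q ≤ P := Finset.sum_le_sum fun i _ => (hq i).2
  have hPQ : P - Q ≤ n * β := by
    have h1 : P - Q = ∑ i, (p i - q i) := by
      rw [hPdef, hQdef, Finset.sum_sub_distrib]
    rw [h1]
    calc ∑ i, (p i - q i) ≤ ∑ _i : Fin n, β :=
          Finset.sum_le_sum fun i _ => by linarith [(hq i).1]
      _ = n * β := by simp [mul_comm]
  have hPpos : 0 < P := lt_of_lt_of_le hs hsum
  have hQpos : 0 < Q := by linarith
  have key : ∀ i, |p i / P - q i / Q| ≤ ((p i - q i) * P + p i * (P - Q)) / (P * Q) := by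
    intro i
    rw [div_sub_div _ _ hPpos.ne' hQpos.ne', abs_div,
      abs_of_pos (mul_pos hPpos hQpos)]
    gcongr
    rw [abs_le]
    constructor <;> nlinarith [hp i, (hq i).2, mul_nonneg (hp i) (sub_nonneg.mpr hQleP),
      mul_nonneg (sub_nonneg.mpr (hq i).2) hPpos.le]
  have hsumle : ∑ i, |p i / P - q i / Q| ≤ 2 * (P - Q) / Q := by
    calc ∑ i, |p i / P - q i / Q|
        ≤ ∑ i, ((p i - q i) * P + p i * (P - Q)) / (P * Q) :=
          Finset.sum_le_sum fun i _ => key i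
      _ = ((P - Q) * P + P * (P - Q)) / (P * Q) := by
          rw [← Finset.sum_div, Finset.sum_add_distrib, ← Finset.sum_mul,
            ← Finset.sum_mul, ← Finset.sum_sub_distrib]
      _ = 2 * (P - Q) / Q := by
          field_simp
          ring
  have hfinal : (P - Q) / Q ≤ n * β / (s - 2 * n * β) := by
    apply div_le_div₀ hnb hPQ (by linarith) (by linarith)
  have h2 : 2 * (P - Q) / Q = 2 * ((P - Q) / Q) := by ring
  linarith
end

section
/- Let M be an n×n row-stochastic matrix and M' a matrix with 0 ≤ M'[i,j] ≤ M[i,j] and M[i,j] − M'[i,j] ≤ δ for all i,j. Define E(1) = δ and the squaring error recurrence E(2k) = (n+1)·E(k) + δ. Then for k a power of two, the entrywise subtractive error between M^k and the repeatedly squared-and-rounded matrix M'(k) is at most E(k), and E(k) = O(δ · k^{c·log k}) for some constant c > 0. -/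
open Finset

/-- The error recurrence `E(2^0) = δ`, `E(2^{t+1}) = (n+1)·E(2^t) + δ`, indexed by
the exponent `t` (so `Eerr n δ t` is the error bound `E(k)` for `k = 2^t`). -/
def Eerr (n : ℕ) (δ : ℝ) : ℕ → ℝ
  | 0 => δ
  | t + 1 => (n + 1) * Eerr n δ t + δ

/-- Let `M` be an `n×n` row-stochastic matrix and `Mseq 0` an entrywise
under-approximation of `M` with subtractive error at most `δ`, and suppose each
`Mseq (t+1)` is obtained from `Mseq t` by squaring and rounding down with subtractive
error at most `δ`. Then for every `t` (i.e. for `k = 2^t` a power of two), the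
entrywise subtractive error between `M^(2^t)` and `Mseq t` is nonnegative and at most
`E(2^t) = Eerr n δ t`, and `E(k) = O(δ · k^(c·log k))` for some constant `c > 0`
(with `k = 2^t`, `k^(c · log₂ k) = (2^t)^(c·t)`). -/
theorem repeated_squaring_error (n : ℕ) (M : Matrix (Fin n) (Fin n) ℝ) (δ : ℝ)
    (hδ : 0 ≤ δ) (hnn : ∀ i j, 0 ≤ M i j) (hstoch : ∀ i, ∑ j, M i j = 1)
    (Mseq : ℕ → Matrix (Fin n) (Fin n) ℝ)
    (hMnn : ∀ t i j, 0 ≤ Mseq t i j)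
    (h0 : ∀ i j, Mseq 0 i j ≤ M i j ∧ M i j - Mseq 0 i j ≤ δ)
    (hstep : ∀ t i j, Mseq (t + 1) i j ≤ (Mseq t * Mseq t) i j ∧
      (Mseq t * Mseq t) i j - Mseq (t + 1) i j ≤ δ) :
    (∀ t i j, 0 ≤ (M ^ (2 ^ t)) i j - Mseq t i j ∧
        (M ^ (2 ^ t)) i j - Mseq t i j ≤ Eerr n δ t) ∧
      ∃ c : ℝ, 0 < c ∧ ∀ t : ℕ, Eerr n δ t ≤ c * δ * ((2 : ℝ) ^ t) ^ (c * (t : ℝ)) := by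

  -- entries of powers of M are nonnegative
  have hpnn : ∀ m i j, 0 ≤ (M ^ m) i j := by
    intro m
    induction m with
    | zero =>
      intro i j
      rw [pow_zero]
      by_cases h : i = j <;> simp [Matrix.one_apply, h]
    | succ m ih =>
      intro i j
      rw [pow_succ, Matrix.mul_apply]
      exact Finset.sum_nonneg fun k _ => mul_nonneg (ih i k) (hnn k j)
  -- row sums of powers of M are 1
  have hrow : ∀ m i, ∑ j, (M ^ m) i j = 1 := by
    intro m
    induction m with
    | zero => intro i; simp [Matrix.one_apply]
    | succ m ih =>
      intro i
      simp only [pow_succ, Matrix.mul_apply]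
      rw [Finset.sum_comm]
      calc ∑ k, ∑ j, (M ^ m) i k * M k j
          = ∑ k, (M ^ m) i k * ∑ j, M k j := by
            simp [Finset.mul_sum]
        _ = 1 := by simp [hstoch, ih i]
  have hle1 : ∀ m i j, (M ^ m) i j ≤ 1 := by
    intro m i j
    calc (M ^ m) i j ≤ ∑ j', (M ^ m) i j' :=
          Finset.single_le_sum (fun k _ => hpnn m i k) (Finset.mem_univ j)
      _ = 1 := hrow m i
  have hEnn : ∀ t, 0 ≤ Eerr n δ t := by
    intro t
    induction t with
    | zero => exact hδ
    | succ t ih =>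
      have hn : (0:ℝ) ≤ (n:ℝ) + 1 := by positivity
      simpa [Eerr] using add_nonneg (mul_nonneg hn ih) hδ
  constructor
  · -- main error induction
    intro t
    induction t with
    | zero =>
      intro i j
      have h := h0 i j
      simp only [pow_zero, pow_one, Eerr]
      exact ⟨by linarith [h.1], h.2⟩
    | succ t ih =>
      intro i j
      have hs := hstep t i j
      have hA2 : M ^ (2 ^ (t+1)) = (M ^ (2 ^ t)) * (M ^ (2 ^ t)) := by
        rw [pow_succ, pow_mul, pow_two]
      set A := M ^ (2 ^ t) with hA
      set B := Mseq t with hB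
      have hBle : ∀ i j, B i j ≤ A i j := fun i j => by linarith [(ih i j).1]
      have hdiff : ∀ i j, A i j - B i j ≤ Eerr n δ t := fun i j => (ih i j).2
      have hBnn : ∀ i j, 0 ≤ B i j := hMnn t
      have key_ge : (B * B) i j ≤ (A * A) i j := by
        rw [Matrix.mul_apply, Matrix.mul_apply]
        refine Finset.sum_le_sum fun k _ => ?_
        exact mul_le_mul (hBle i k) (hBle k j) (hBnn k j) (hpnn _ i k)
      have key_le : (A * A) i j - (B * B) i j ≤ ((n:ℝ)+1) * Eerr n δ t := by
        rw [Matrix.mul_apply, Matrix.mul_apply, ← Finset.sum_sub_distrib]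
        have hterm : ∀ k ∈ Finset.univ, A i k * A k j - B i k * B k j ≤
            A i k * Eerr n δ t + (A i k - B i k) := by
          intro k _
          have h2 : A i k * (A k j - B k j) ≤ A i k * Eerr n δ t :=
            mul_le_mul_of_nonneg_left (hdiff k j) (hpnn _ i k)
          have hB1 : B k j ≤ 1 := le_trans (hBle k j) (hle1 _ k j)
          have hABnn : 0 ≤ A i k - B i k := by linarith [hBle i k]
          have h3 : (A i k - B i k) * B k j ≤ (A i k - B i k) * 1 :=
            mul_le_mul_of_nonneg_left hB1 hABnn
          nlinarith [h2, h3]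
        calc ∑ k, (A i k * A k j - B i k * B k j)
            ≤ ∑ k, (A i k * Eerr n δ t + (A i k - B i k)) := Finset.sum_le_sum hterm
          _ = (∑ k, A i k) * Eerr n δ t + ∑ k, (A i k - B i k) := by
              rw [Finset.sum_add_distrib, Finset.sum_mul]
          _ ≤ 1 * Eerr n δ t + (n:ℝ) * Eerr n δ t := by
              have h4 : (∑ k, A i k) = 1 := hrow _ i
              have h5 : ∑ k, (A i k - B i k) ≤ ∑ _k : Fin n, Eerr n δ t :=
                Finset.sum_le_sum (fun k _ => hdiff i k)
              rw [Finset.sum_const, Finset.card_univ, Fintype.card_fin, nsmul_eq_mul] at h5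
              rw [h4]
              linarith
          _ = ((n:ℝ)+1) * Eerr n δ t := by ring
      rw [hA2]
      constructor
      · have h1 : Mseq (t+1) i j ≤ (B * B) i j := hs.1
        linarith
      · have h1 : (B * B) i j - Mseq (t+1) i j ≤ δ := hs.2
        simp only [Eerr]
        push_cast
        linarith
  · -- asymptotic bound
    have hclosed : ∀ t, Eerr n δ t ≤ δ * (t+1) * ((n:ℝ)+1)^t := by
      intro t
      induction t with
      | zero => simp [Eerr]
      | succ t ih =>
        have h1 : (1:ℝ) ≤ ((n:ℝ)+1)^(t+1) := one_le_pow₀ (by nlinarith [Nat.cast_nonneg (α := ℝ) n])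
        have hn : (0:ℝ) ≤ (n:ℝ) + 1 := by positivity
        simp only [Eerr]
        have h2 : ((n:ℝ)+1) * Eerr n δ t ≤ ((n:ℝ)+1) * (δ * (t+1) * ((n:ℝ)+1)^t) :=
          mul_le_mul_of_nonneg_left ih hn
        have h3 : ((n:ℝ)+1) * (δ * (t+1) * ((n:ℝ)+1)^t) = δ * (t+1) * ((n:ℝ)+1)^(t+1) := by
          ring
        have h4 : δ * 1 ≤ δ * ((n:ℝ)+1)^(t+1) := mul_le_mul_of_nonneg_left h1 hδ
        push_cast
        nlinarith [h2, h3, h4]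
    refine ⟨(n:ℝ) + 2, by positivity, fun t => ?_⟩
    have hc1 : (1:ℝ) ≤ (n:ℝ) + 2 := by nlinarith [Nat.cast_nonneg (α := ℝ) n]
    -- natural number inequality
    have hnat : (t+1) * (n+1)^t ≤ 2 ^ ((n+2)*t) := by
      have e : (n+2)*t = t + (n+1)*t := by ring
      rw [e, pow_add, pow_mul]
      have h1 : t + 1 ≤ 2 ^ t := Nat.succ_le_of_lt (Nat.lt_two_pow_self (n := t))
      have h2 : (n+1)^t ≤ (2^(n+1))^t := by
        apply Nat.pow_le_pow_left
        exact le_trans (Nat.succ_le_of_lt (Nat.lt_two_pow_self (n := n))) (Nat.pow_le_pow_right (by norm_num) (Nat.le_succ n))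
      exact Nat.mul_le_mul h1 h2
    have hnatR : ((t:ℝ)+1) * ((n:ℝ)+1)^t ≤ (2:ℝ) ^ ((n+2)*t) := by
      exact_mod_cast hnat
    -- rpow manipulation
    have hrp : ((2:ℝ) ^ ((n+2)*t) : ℝ) ≤ ((2:ℝ) ^ t) ^ (((n:ℝ)+2) * (t:ℝ)) := by
      have e1 : ((2:ℝ) ^ t) ^ (((n:ℝ)+2) * (t:ℝ)) = (2:ℝ) ^ ((t:ℝ) * (((n:ℝ)+2) * (t:ℝ))) := by
        rw [← Real.rpow_natCast 2 t, ← Real.rpow_mul (by norm_num)]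
      have e2 : ((2:ℝ) ^ ((n+2)*t) : ℝ) = (2:ℝ) ^ ((((n+2)*t : ℕ)):ℝ) := by
        rw [Real.rpow_natCast]
      rw [e1, e2]
      apply Real.rpow_le_rpow_of_exponent_le (by norm_num)
      push_cast
      rcases Nat.eq_zero_or_pos t with h | h
      · subst h; simp
      · have ht : (1:ℝ) ≤ (t:ℝ) := by exact_mod_cast h
        have hpos : (0:ℝ) ≤ ((n:ℝ)+2)*(t:ℝ) := by positivity
        nlinarith [mul_le_mul_of_nonneg_right ht hpos]
    have hrpnn : (0:ℝ) ≤ ((2:ℝ) ^ t) ^ (((n:ℝ)+2) * (t:ℝ)) :=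
      Real.rpow_nonneg (by positivity) _
    calc Eerr n δ t ≤ δ * (t+1) * ((n:ℝ)+1)^t := hclosed t
      _ ≤ δ * ((2:ℝ) ^ ((n+2)*t)) := by
          have := mul_le_mul_of_nonneg_left hnatR hδ
          nlinarith [this]
      _ ≤ δ * (((2:ℝ) ^ t) ^ (((n:ℝ)+2) * (t:ℝ))) := mul_le_mul_of_nonneg_left hrp hδ
      _ ≤ ((n:ℝ)+2) * δ * (((2:ℝ) ^ t) ^ (((n:ℝ)+2) * (t:ℝ))) := by
          nlinarith [mul_nonneg hδ hrpnn]
end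

section
/- Suppose nk balls are distributed into n bins, where the bin of each ball is determined by an (8c·log n)-wise independent hash function that is uniform on [n] for each ball, with k ≥ 2 and c > 1. Then for any fixed bin v, the probability that bin v receives at least 16ck·log n balls is at most n^{-2c}. -/
/-!
If bin `v` receives at least `m = 2kt = 16ck·log₂ n` balls, then at least `C(m, t)` of the
`t`-element sets of balls land entirely in `v`. By `t`-wise independence each fixed `t`-set
does so with probability `n⁻ᵗ`, so the expected number of such sets is `C(nk, t)·n⁻ᵗ`, and
Markov's inequality bounds the probability by
`C(nk, t)·n⁻ᵗ / C(m, t) ≤ (nk / ((m + 1 - t)·n))ᵗ ≤ 2⁻ᵗ = n^(-8c)`.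
-/

open MeasureTheory ProbabilityTheory Finset
open scoped ENNReal

theorem Nat.choose_mul_pow_le_pow_mul_choose (N m t : ℕ) :
    N.choose t * (m + 1 - t) ^ t ≤ N ^ t * m.choose t := by
  refine Nat.le_of_mul_le_mul_left ?_ t.factorial_pos
  calc t.factorial * (N.choose t * (m + 1 - t) ^ t)
      = N.descFactorial t * (m + 1 - t) ^ t := by
        rw [Nat.descFactorial_eq_factorial_mul_choose]; ring
    _ ≤ N ^ t * m.descFactorial t :=
        Nat.mul_le_mul (N.descFactorial_le_pow t) (m.pow_sub_le_descFactorial t)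
    _ = t.factorial * (N ^ t * m.choose t) := by
        rw [Nat.descFactorial_eq_factorial_mul_choose]; ring

theorem Nat.choose_mul_two_pow_le (n k t : ℕ) (hk : 1 ≤ k) (ht : 1 ≤ t) :
    (n * k).choose t * 2 ^ t ≤ (2 * k * t).choose t * n ^ t := by
  have hgap : 2 * k ≤ 2 * k * t + 1 - t := by
    have : 2 * k - 1 ≤ (2 * k - 1) * t := Nat.le_mul_of_pos_right _ ht
    rw [Nat.sub_mul, one_mul] at this
    omega
  refine Nat.le_of_mul_le_mul_right ?_ (pow_pos (by omega : 0 < k) t)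
  calc (n * k).choose t * 2 ^ t * k ^ t = (n * k).choose t * (2 * k) ^ t := by ring
    _ ≤ (n * k).choose t * (2 * k * t + 1 - t) ^ t := by gcongr
    _ ≤ (n * k) ^ t * (2 * k * t).choose t := Nat.choose_mul_pow_le_pow_mul_choose ..
    _ = (2 * k * t).choose t * n ^ t * k ^ t := by ring

theorem ENNReal.choose_mul_inv_pow_le (n k t : ℕ) (hn : n ≠ 0) (hk : 1 ≤ k) (ht : 1 ≤ t) :
    ((n * k).choose t : ℝ≥0∞) * (n : ℝ≥0∞)⁻¹ ^ t ≤ (2 * k * t).choose t * 2⁻¹ ^ t := by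
  have hcast : ((n * k).choose t : ℝ≥0∞) * 2 ^ t ≤ (2 * k * t).choose t * n ^ t := by
    exact_mod_cast Nat.choose_mul_two_pow_le n k t hk ht
  have htwo : (2 : ℝ≥0∞) ^ t * 2⁻¹ ^ t = 1 := by
    rw [← mul_pow, ENNReal.mul_inv_cancel two_ne_zero ENNReal.ofNat_ne_top, one_pow]
  have hn' : (n : ℝ≥0∞) ^ t * (n : ℝ≥0∞)⁻¹ ^ t = 1 := by
    rw [← mul_pow, ENNReal.mul_inv_cancel (by exact_mod_cast hn) (ENNReal.natCast_ne_top n),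
      one_pow]
  calc ((n * k).choose t : ℝ≥0∞) * (n : ℝ≥0∞)⁻¹ ^ t
      = (n * k).choose t * 2 ^ t * (n : ℝ≥0∞)⁻¹ ^ t * 2⁻¹ ^ t := by
        rw [mul_right_comm _ _ (2⁻¹ ^ t), mul_assoc _ (2 ^ t), htwo, mul_one]
    _ ≤ (2 * k * t).choose t * n ^ t * (n : ℝ≥0∞)⁻¹ ^ t * 2⁻¹ ^ t := by gcongr
    _ = (2 * k * t).choose t * 2⁻¹ ^ t := by
        rw [mul_assoc _ (_ ^ t) ((n : ℝ≥0∞)⁻¹ ^ t), hn', mul_one]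

theorem ENNReal.inv_two_pow_le_ofReal_rpow_neg {n a : ℝ} (hn : 0 < n) {t : ℕ}
    (h : a * Real.logb 2 n ≤ t) : (2⁻¹ : ℝ≥0∞) ^ t ≤ ENNReal.ofReal (n ^ (-a)) := by
  rw [← ENNReal.ofReal_ofNat 2, ← ENNReal.ofReal_inv_of_pos two_pos,
    ← ENNReal.ofReal_pow (by norm_num)]
  refine ENNReal.ofReal_le_ofReal ?_
  rw [← Real.rpow_logb two_pos (by norm_num) hn, ← Real.rpow_mul zero_le_two, inv_pow,
    ← Real.rpow_natCast, ← Real.rpow_neg zero_le_two]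
  exact Real.rpow_le_rpow_of_exponent_le one_le_two (by linarith)

section SubsetCount

variable {Ω ι : Type*} [Fintype ι] (T : Ω → Finset ι)

theorem sum_powersetCard_indicator_subset_eq_choose (t : ℕ) (ω : Ω) :
    ∑ S ∈ powersetCard t univ, {ω | S ⊆ T ω}.indicator (1 : Ω → ℝ≥0∞) ω =
      (#(T ω)).choose t := by
  classical
  simp only [Set.indicator_apply, Set.mem_ofPred_eq, Pi.one_apply]
  rw [sum_boole, ← card_powersetCard]
  congr 2
  ext S
  simp only [mem_filter, mem_powersetCard, subset_univ, true_and]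
  tauto

theorem choose_mul_measure_le_sum_measure_subset [MeasurableSpace Ω] (μ : Measure Ω)
    (hT : ∀ S, MeasurableSet {ω | S ⊆ T ω}) (m t : ℕ) :
    m.choose t * μ {ω | m ≤ #(T ω)} ≤ ∑ S ∈ powersetCard t univ, μ {ω | S ⊆ T ω} := by
  set f : Ω → ℝ≥0∞ := fun ω => ∑ S ∈ powersetCard t univ, {ω | S ⊆ T ω}.indicator 1 ω
  have hf : Measurable f :=
    Finset.measurable_sum _ fun S _ => measurable_one.indicator (hT S)
  have hsub : {ω | m ≤ #(T ω)} ⊆ {ω | (m.choose t : ℝ≥0∞) ≤ f ω} := fun ω hω => by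
    simp only [Set.mem_ofPred_eq, f, sum_powersetCard_indicator_subset_eq_choose]
    exact_mod_cast Nat.choose_le_choose t hω
  calc m.choose t * μ {ω | m ≤ #(T ω)}
      ≤ m.choose t * μ {ω | (m.choose t : ℝ≥0∞) ≤ f ω} := by gcongr
    _ ≤ ∫⁻ ω, f ω ∂μ := mul_meas_ge_le_lintegral₀ hf.aemeasurable _
    _ = ∑ S ∈ powersetCard t univ, μ {ω | S ⊆ T ω} := by
        rw [lintegral_finsetSum _ fun S _ => measurable_one.indicator (hT S)]
        simp only [lintegral_indicator_one (hT _)]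

end SubsetCount

theorem measure_biInter_preimage_eq_pow {Ω ι β : Type*} [MeasurableSpace Ω] [MeasurableSpace β]
    (μ : Measure Ω) (h : ι → Ω → β) (S : Finset ι) (hind : iIndepFun (fun j : S => h j) μ)
    {B : Set β} (hB : MeasurableSet B) {p : ℝ≥0∞} (hp : ∀ j, μ (h j ⁻¹' B) = p) :
    μ (⋂ j ∈ S, h j ⁻¹' B) = p ^ #S := by
  have := hind.measure_inter_preimage_eq_mul univ (sets := fun _ => B) fun _ _ => hB
  simp only [mem_univ, Set.iInter_true, hp, prod_const, card_univ, Fintype.card_coe] at this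
  rw [← this]
  congr 1
  ext ω
  simp

theorem balls_in_bins_twise_general {Ω : Type*} [MeasurableSpace Ω] (μ : Measure Ω)
    (n k : ℕ) (hn : 2 ≤ n) (hk : 2 ≤ k)
    (c : ℝ) (hc : 1 < c) (t : ℕ) (ht : (t : ℝ) = 8 * c * Real.logb 2 n)
    (h : Fin (n * k) → Ω → Fin n)
    (hmeas : ∀ j, Measurable (h j))
    (hunif : ∀ j x, μ {ω | h j ω = x} = (n : ENNReal)⁻¹)
    (hindep : ∀ s : Finset (Fin (n * k)), s.card = t →
      iIndepFun (m := fun _ : s => (inferInstance : MeasurableSpace (Fin n)))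
        (fun j : s => h j) μ) :
    ∀ v : Fin n,
      μ {ω | 16 * c * (k : ℝ) * Real.logb 2 n ≤
          ((Finset.univ.filter (fun j => h j ω = v)).card : ℝ)} ≤
        ENNReal.ofReal ((n : ℝ) ^ (-(2 * c))) := by
  intro v
  have hlog : 1 ≤ Real.logb 2 n := by
    rw [Real.le_logb_iff_rpow_le one_lt_two (by positivity), Real.rpow_one]
    exact_mod_cast hn
  have ht1 : 1 ≤ t := by exact_mod_cast (show (1 : ℝ) ≤ t by rw [ht]; nlinarith)
  have hthreshold : 16 * c * (k : ℝ) * Real.logb 2 n = ((2 * k * t : ℕ) : ℝ) := by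
    push_cast; rw [ht]; ring
  set T : Ω → Finset (Fin (n * k)) := fun ω => univ.filter (h · ω = v)
  have hsubset (S : Finset (Fin (n * k))) : {ω | S ⊆ T ω} = ⋂ j ∈ S, h j ⁻¹' {v} := by
    ext ω; simp [T, subset_iff]
  have hexpect : ∑ S ∈ powersetCard t univ, μ {ω | S ⊆ T ω} =
      (n * k).choose t * (n : ℝ≥0∞)⁻¹ ^ t := by
    rw [sum_congr rfl fun S hS => by
        rw [hsubset, measure_biInter_preimage_eq_pow μ h S (hindep S (mem_powersetCard.1 hS).2)
          (.singleton v) (hunif · v), (mem_powersetCard.1 hS).2],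
      sum_const, card_powersetCard, card_univ, Fintype.card_fin, nsmul_eq_mul]
  have hmarkov := choose_mul_measure_le_sum_measure_subset T μ
    (fun S => hsubset S ▸ .biInter S.countable_toSet fun j _ => hmeas j (.singleton v))
    (2 * k * t) t
  have hchoose : ((2 * k * t).choose t : ℝ≥0∞) ≠ 0 := by
    exact_mod_cast (Nat.choose_pos (Nat.le_mul_of_pos_left t (by omega))).ne'
  simp only [hthreshold, Nat.cast_le]
  rw [← ENNReal.mul_le_mul_iff_right hchoose (ENNReal.natCast_ne_top _)]
  calc _ ≤ _ := hmarkov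
    _ = (n * k).choose t * (n : ℝ≥0∞)⁻¹ ^ t := hexpect
    _ ≤ (2 * k * t).choose t * 2⁻¹ ^ t :=
        ENNReal.choose_mul_inv_pow_le n k t (by omega) (by omega) ht1
    _ ≤ _ := by
        gcongr
        exact ENNReal.inv_two_pow_le_ofReal_rpow_neg (by positivity) (by nlinarith)

/-- Suppose `n·k` balls are distributed into `n` bins, where the bin of
each ball is given by an `(8c·log n)`-wise independent hash family that is uniform on
`[n]` for each ball, with `k ≥ 2` and `c > 1`. Then for any fixed bin `v`, the
probability that bin `v` receives at least `16ck·log n` balls is at most `n^{-2c}`. -/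
theorem balls_in_bins_twise {Ω : Type*} [MeasurableSpace Ω] (μ : Measure Ω)
    [IsProbabilityMeasure μ] (n k : ℕ) (hn : 2 ≤ n) (hk : 2 ≤ k)
    (c : ℝ) (hc : 1 < c) (t : ℕ) (ht : (t : ℝ) = 8 * c * Real.logb 2 n)
    (h : Fin (n * k) → Ω → Fin n)
    (hmeas : ∀ j, Measurable (h j))
    (hunif : ∀ j x, μ {ω | h j ω = x} = (n : ENNReal)⁻¹)
    (hindep : ∀ s : Finset (Fin (n * k)), s.card = t →
      iIndepFun (m := fun _ : s => (inferInstance : MeasurableSpace (Fin n)))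
        (fun j : s => h j) μ) :
    ∀ v : Fin n,
      μ {ω | 16 * c * (k : ℝ) * Real.logb 2 n ≤
          ((Finset.univ.filter (fun j => h j ω = v)).card : ℝ)} ≤
        ENNReal.ofReal ((n : ℝ) ^ (-(2 * c))) :=
  balls_in_bins_twise_general μ n k hn hk c hc t ht h hmeas hunif hindep
end

section
/- In the index-based doubling merge, if each W_u^i (for i = 1,...,k) is an independent length-η random walk from u, and each walk W_u^i with i ≤ k/2 ending at vertex v is concatenated with W_v^{k−i}, then each resulting concatenated walk W_u^i ∘ W_v^{k−i} is a correctly distributed random walk of length 2η starting at u. -/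
open Finset

/-- The value of a finite path at time `t`, clamping `t` to the path length. -/
def pathVal {V : Type*} {L : ℕ} (w : Fin (L + 1) → V) (t : ℕ) : V :=
  w ⟨min t L, by omega⟩

/-- The probability weight of a length-`L` path under transition matrix `P`. -/
def pathWeight {V : Type*} (P : Matrix V V ℝ) (L : ℕ) (w : Fin (L + 1) → V) : ℝ :=
  ∏ t ∈ Finset.range L, P (pathVal w t) (pathVal w (t + 1))

lemma pathVal_le {V : Type*} {L : ℕ} (w : Fin (L + 1) → V) {t : ℕ} (ht : t ≤ L) :
    pathVal w t = w ⟨t, by omega⟩ := by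
  simp [pathVal, Nat.min_eq_left ht]

lemma sum_start_pathWeight {V : Type*} [Fintype V] [DecidableEq V] (P : Matrix V V ℝ)
    (hstoch : ∀ u, ∑ v, P u v = 1) :
    ∀ (L : ℕ) (x : V),
      ∑ w : Fin (L + 1) → V, (if pathVal w 0 = x then pathWeight P L w else 0) = 1 := by
  intro L
  induction L with
  | zero =>
    intro x
    rw [← (Equiv.funUnique (Fin 1) V).symm.sum_comp
      (fun w => if pathVal w 0 = x then pathWeight P 0 w else 0)]
    simp [pathVal, pathWeight]
  | succ L IH =>
    intro x
    have key : ∀ w : Fin (L + 2) → V,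
        pathWeight P (L + 1) w = P (w 0) (w 1) * pathWeight P L (fun s => w s.succ) := by
      intro w
      rw [pathWeight, Finset.prod_range_succ', mul_comm]
      congr 1
      · congr 1 <;> simp [pathVal]
    rw [← (Fin.consEquiv (fun _ : Fin (L + 2) => V)).sum_comp
      (fun w => if pathVal w 0 = x then pathWeight P (L + 1) w else 0)]
    rw [Fintype.sum_prod_type]
    have h0 : ∀ (a : V) (g : Fin (L + 1) → V), pathVal (Fin.cons a g : Fin (L+2) → V) 0 = a := by
      intro a g; rw [pathVal_le _ (by omega)]; exact rfl
    have step1 : ∀ a : V, ∀ g : Fin (L + 1) → V,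
        (if pathVal ((Fin.consEquiv fun _ : Fin (L + 2) => V) (a, g)) 0 = x
          then pathWeight P (L + 1) ((Fin.consEquiv fun _ : Fin (L + 2) => V) (a, g)) else 0)
        = (if a = x then P a (g 0) * pathWeight P L g else 0) := by
      intro a g
      have he : ((Fin.consEquiv fun _ : Fin (L + 2) => V) (a, g)) = Fin.cons a g := rfl
      rw [he, h0, key]
      have h1 : (Fin.cons a g : Fin (L+2) → V) 0 = a := rfl
      have h2 : (Fin.cons a g : Fin (L+2) → V) 1 = g 0 := rfl
      have h3 : (fun s : Fin (L+1) => (Fin.cons a g : Fin (L+2) → V) s.succ) = g := by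
        funext s
        exact Fin.cons_succ (α := fun _ : Fin (L+2) => V) a g s
      rw [h1, h2, h3]
    simp only [step1]
    rw [Finset.sum_comm]
    have step2 : ∀ g : Fin (L + 1) → V,
        (∑ a : V, if a = x then P a (g 0) * pathWeight P L g else 0)
        = P x (g 0) * pathWeight P L g := by
      intro g
      rw [Finset.sum_ite_eq' univ x (fun a => P a (g 0) * pathWeight P L g)]
      simp
    simp only [step2]
    calc ∑ g : Fin (L + 1) → V, P x (g 0) * pathWeight P L g
        = ∑ g : Fin (L + 1) → V, ∑ y : V,
            (if pathVal g 0 = y then P x y * pathWeight P L g else 0) := by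
          refine Finset.sum_congr rfl fun g _ => ?_
          rw [Finset.sum_ite_eq univ (pathVal g 0)]
          have : pathVal g 0 = g 0 := by rw [pathVal_le _ (by omega)]; exact rfl
          simp [this]
      _ = ∑ y : V, P x y * ∑ g : Fin (L + 1) → V,
            (if pathVal g 0 = y then pathWeight P L g else 0) := by
          rw [Finset.sum_comm]
          refine Finset.sum_congr rfl fun y _ => ?_
          rw [Finset.mul_sum]
          refine Finset.sum_congr rfl fun g _ => ?_
          rw [mul_ite, mul_zero]
      _ = ∑ y : V, P x y * 1 := by
          refine Finset.sum_congr rfl fun y _ => ?_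
          rw [IH y]
      _ = 1 := by simp [hstoch x]

set_option linter.unusedVariables false

/-- In the index-based doubling merge, if every `W_u^i` (for vertices
`u` and indices `i ∈ {1, ..., k}`) is an independent length-`η` random walk from `u`
(formalized by the product measure on configurations `ω`, where the weight of a
configuration is the product over all `(u, i)` of the start-indicator and the path
weight of `ω (u, i)`), and the walk `W_u^i` with `1 ≤ i`, `i ≤ k/2`, `i ≠ k − i`
(i.e. `2i < k`) is concatenated with `W_v^{k−i}` where `v = W_u^i[end]`, then the
concatenated walk is a correctly distributed random walk of length `2η` starting at
`u`: the probability that it equals any fixed trajectory `z` with `z 0 = u` is the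
path weight of `z`. -/
theorem doubling_merge_correct {V : Type*} [Fintype V] [DecidableEq V]
    (P : Matrix V V ℝ) (hnn : ∀ u v, 0 ≤ P u v) (hstoch : ∀ u, ∑ v, P u v = 1)
    (k η : ℕ) (hη : 0 < η) (i : ℕ) (hi1 : 1 ≤ i) (hik : 2 * i < k)
    (u : V) (z : Fin (2 * η + 1) → V) (hz : pathVal z 0 = u) :
    ∑ ω ∈ Finset.univ.filter
        (fun ω : V × Fin (k + 1) → (Fin (η + 1) → V) =>
          (∀ t ≤ η, pathVal (ω (u, ⟨i, by omega⟩)) t = pathVal z t) ∧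
          (∀ t ≤ η,
            pathVal (ω (pathVal (ω (u, ⟨i, by omega⟩)) η, ⟨k - i, by omega⟩)) t =
              pathVal z (η + t))),
      ∏ p : V × Fin (k + 1),
        (if pathVal (ω p) 0 = p.1 then pathWeight P η (ω p) else 0)
    = pathWeight P (2 * η) z := by
  set A : V × Fin (k + 1) := (u, ⟨i, by omega⟩) with hA_def
  set B : V × Fin (k + 1) := (pathVal z η, ⟨k - i, by omega⟩) with hB_def
  have hAB : A ≠ B := by
    intro h
    have := congrArg (fun p : V × Fin (k + 1) => (p.2 : ℕ)) h
    simp [hA_def, hB_def] at this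
    omega
  set wA : Fin (η + 1) → V := fun s => pathVal z s.val with hwA_def
  set wB : Fin (η + 1) → V := fun s => pathVal z (η + s.val) with hwB_def
  set f : (V × Fin (k + 1)) → (Fin (η + 1) → V) → ℝ :=
    fun p w => if pathVal w 0 = p.1 then pathWeight P η w else 0 with hf_def
  set g : (V × Fin (k + 1)) → (Fin (η + 1) → V) → ℝ :=
    fun p w => if (p = A ∧ w ≠ wA) ∨ (p = B ∧ w ≠ wB) then 0 else f p w with hg_def
  -- equivalence of the filter condition
  have hequiv : ∀ ω : V × Fin (k + 1) → (Fin (η + 1) → V),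
      ((∀ t ≤ η, pathVal (ω A) t = pathVal z t) ∧
        (∀ t ≤ η, pathVal (ω (pathVal (ω A) η, ⟨k - i, by omega⟩)) t = pathVal z (η + t)))
      ↔ (ω A = wA ∧ ω B = wB) := by
    intro ω
    constructor
    · rintro ⟨h1, h2⟩
      have hA : ω A = wA := by
        funext s
        have hs : (s : ℕ) ≤ η := by omega
        have := h1 s hs
        rw [pathVal_le (ω A) hs] at this
        simpa using this
      have hv : pathVal (ω A) η = pathVal z η := h1 η le_rfl
      refine ⟨hA, ?_⟩
      funext s
      have hs : (s : ℕ) ≤ η := by omega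
      have := h2 s hs
      rw [hv] at this
      rw [pathVal_le _ hs] at this
      simpa [hB_def] using this
    · rintro ⟨hA, hB⟩
      have hvA : ∀ t ≤ η, pathVal (ω A) t = pathVal z t := by
        intro t ht
        rw [pathVal_le (ω A) ht, hA]
      refine ⟨hvA, ?_⟩
      intro t ht
      rw [hvA η le_rfl]
      have : (pathVal z η, (⟨k - i, by omega⟩ : Fin (k + 1))) = B := rfl
      rw [this, pathVal_le _ ht, hB]
  -- pointwise rewriting of the summand
  have hpt : ∀ ω : V × Fin (k + 1) → (Fin (η + 1) → V),
      (if ((∀ t ≤ η, pathVal (ω A) t = pathVal z t) ∧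
          (∀ t ≤ η, pathVal (ω (pathVal (ω A) η, ⟨k - i, by omega⟩)) t = pathVal z (η + t)))
        then ∏ p : V × Fin (k + 1), f p (ω p) else 0)
      = ∏ p : V × Fin (k + 1), g p (ω p) := by
    intro ω
    by_cases h : ω A = wA ∧ ω B = wB
    · rw [if_pos ((hequiv ω).2 h)]
      refine Finset.prod_congr rfl fun p _ => ?_
      rw [hg_def]
      simp only
      rw [if_neg]
      rintro (⟨hpA, hne⟩ | ⟨hpB, hne⟩)
      · exact hne (hpA ▸ h.1)
      · exact hne (hpB ▸ h.2)
    · rw [if_neg (fun hc => h ((hequiv ω).1 hc))]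
      rcases not_and_or.1 h with hne | hne
      · exact (Finset.prod_eq_zero (mem_univ A) (by simp [hg_def, hne])).symm
      · exact (Finset.prod_eq_zero (mem_univ B) (by simp [hg_def, hne])).symm
  rw [Finset.sum_filter]
  calc ∑ ω : V × Fin (k + 1) → (Fin (η + 1) → V),
        (if ((∀ t ≤ η, pathVal (ω A) t = pathVal z t) ∧
            (∀ t ≤ η, pathVal (ω (pathVal (ω A) η, ⟨k - i, by omega⟩)) t = pathVal z (η + t)))
          then ∏ p : V × Fin (k + 1), f p (ω p) else 0)
      = ∑ ω : V × Fin (k + 1) → (Fin (η + 1) → V), ∏ p : V × Fin (k + 1), g p (ω p) :=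
        Finset.sum_congr rfl fun ω _ => hpt ω
    _ = ∏ p : V × Fin (k + 1), ∑ w : Fin (η + 1) → V, g p w := by
        have := (Finset.prod_univ_sum (fun _ : V × Fin (k + 1) => (univ : Finset (Fin (η + 1) → V)))
          (fun p w => g p w)).symm
        rwa [Fintype.piFinset_univ] at this
    _ = ∏ p ∈ ({A, B} : Finset (V × Fin (k + 1))), ∑ w : Fin (η + 1) → V, g p w := by
        refine (Finset.prod_subset (Finset.subset_univ _) fun p _ hp => ?_).symm
        simp only [Finset.mem_insert, Finset.mem_singleton, not_or] at hp
        have : ∀ w : Fin (η + 1) → V, g p w = f p w := by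
          intro w; rw [hg_def]; simp only
          rw [if_neg]; rintro (⟨h1, _⟩ | ⟨h1, _⟩); exacts [hp.1 h1, hp.2 h1]
        simp only [this]
        exact sum_start_pathWeight P hstoch η p.1
    _ = (∑ w : Fin (η + 1) → V, g A w) * (∑ w : Fin (η + 1) → V, g B w) :=
        Finset.prod_pair hAB
    _ = f A wA * f B wB := by
        congr 1
        · have : ∀ w : Fin (η + 1) → V, g A w = if w = wA then f A w else 0 := by
            intro w; rw [hg_def]; simp only
            by_cases hw : w = wA
            · subst hw; simp [hAB]
            · simp [hw]
          simp only [this]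
          rw [Finset.sum_ite_eq' univ wA (fun w => f A w)]
          simp
        · have : ∀ w : Fin (η + 1) → V, g B w = if w = wB then f B w else 0 := by
            intro w; rw [hg_def]; simp only
            by_cases hw : w = wB
            · subst hw; simp [hAB.symm]
            · simp [hw]
          simp only [this]
          rw [Finset.sum_ite_eq' univ wB (fun w => f B w)]
          simp
    _ = pathWeight P (2 * η) z := by
        have hfA : f A wA = ∏ t ∈ Finset.range η, P (pathVal z t) (pathVal z (t + 1)) := by
          rw [hf_def]; simp only
          rw [if_pos]
          · rw [pathWeight]
            refine Finset.prod_congr rfl fun t ht => ?_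
            simp only [Finset.mem_range] at ht
            rw [pathVal_le wA (by omega), pathVal_le wA (by omega)]
          · rw [pathVal_le wA (by omega)]
            exact hz
        have hfB : f B wB = ∏ t ∈ Finset.range η, P (pathVal z (η + t)) (pathVal z (η + t + 1)) := by
          rw [hf_def]; simp only
          rw [if_pos]
          · rw [pathWeight]
            refine Finset.prod_congr rfl fun t ht => ?_
            simp only [Finset.mem_range] at ht
            rw [pathVal_le wB (by omega), pathVal_le wB (by omega)]
            rfl
          · rw [pathVal_le wB (by omega)]
            simp [hwB_def, hB_def]
        rw [hfA, hfB, pathWeight]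
        have hr : Finset.range (2 * η) = Finset.range (η + η) := by rw [two_mul]
        rw [hr, Finset.prod_range_add]
end
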